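/- arXiv:math/9805142 — 5 statements merged into one kernel-verified Lean document; each statement's English description precedes it below -/
import Mathlib

section
/- Let σ(x) = σ₀x² + σ₁x + σ₂, τ(x) = τ₀x + τ₁, λ(n) = nτ₀ + n(n-1)σ₀. Set φ₁(n) = τ₀ + (n-1)σ₀, and assume 2φ₁(n) + 2σ₀ - τ₀ ≠ 0. Define ψ₁(n) = [φ₁(n)(τ₁ + τ₀ - σ₀ - φ₁(n)) + λ(n)σ₀ + λ(n)σ₁ + (1/2)λ(n)τ₀]/(2φ₁(n) + 2σ₀ - τ₀) and μ₁(n) = ψ₁(n)(ψ₁(n) + φ₁(n) + σ₁ + σ₀ - τ₁) - (1/2)λ(n)(σ₀ + σ₁ + 2σ₂ + τ₁) - φ₁(n)(σ₂ + τ₁ + (1/2)λ(n)) - (1/4)λ(n)². Then φ(x) = φ₁(n)x + ψ₁(n) satisfies the discrete Riccati equation (λ(n)/2)(σ(x+1) + σ(x) + τ(x)) + λ(n)²/4 + μ₁(n) + (σ(x)+τ(x))φ(x+1) - σ(x+1)φ(x) + (λ(n)/2)(φ(x+1) - φ(x)) - φ(x)φ(x+1) = 0 for all x. -/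
/-!
For the linear ansatz φ(x) = φ₁x + ψ₁ the left-hand side of the Riccati equation is a
polynomial of degree two in x. With φ₁ = τ₀ + (n-1)σ₀ its x² coefficient vanishes
identically and μ₁ is defined so that its constant term vanishes, leaving
x · (N - ψ₁ D), where ψ₁ = N / D is the formula for ψ₁; this is zero as soon as D ≠ 0.
-/

theorem riccati_residual_linear_eq {K : Type*} [Field K] [CharZero K]
    (σ₀ σ₁ σ₂ τ₀ τ₁ n lam φ₁ ψ₁ μ₁ x : K)
    (hlam : lam = n * τ₀ + n * (n - 1) * σ₀)
    (hφ : φ₁ = τ₀ + (n - 1) * σ₀)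
    (hμ : μ₁ = ψ₁ * (ψ₁ + φ₁ + σ₁ + σ₀ - τ₁)
        - (1 / 2) * lam * (σ₀ + σ₁ + 2 * σ₂ + τ₁)
        - φ₁ * (σ₂ + τ₁ + (1 / 2) * lam) - (1 / 4) * lam ^ 2) :
    (lam / 2) * ((σ₀ * (x + 1) ^ 2 + σ₁ * (x + 1) + σ₂)
          + (σ₀ * x ^ 2 + σ₁ * x + σ₂) + (τ₀ * x + τ₁))
        + lam ^ 2 / 4 + μ₁
        + ((σ₀ * x ^ 2 + σ₁ * x + σ₂) + (τ₀ * x + τ₁)) * (φ₁ * (x + 1) + ψ₁)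
        - (σ₀ * (x + 1) ^ 2 + σ₁ * (x + 1) + σ₂) * (φ₁ * x + ψ₁)
        + (lam / 2) * ((φ₁ * (x + 1) + ψ₁) - (φ₁ * x + ψ₁))
        - (φ₁ * x + ψ₁) * (φ₁ * (x + 1) + ψ₁)
      = x * ((φ₁ * (τ₁ + τ₀ - σ₀ - φ₁) + lam * σ₀ + lam * σ₁ + (1 / 2) * lam * τ₀)
          - ψ₁ * (2 * φ₁ + 2 * σ₀ - τ₀)) := by
  subst hμ hφ hlam
  ring

/-- The first polynomial solution φ(x) = φ₁(n)x + ψ₁(n) of the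
discrete Riccati equation, with φ₁(n) = τ₀ + (n-1)σ₀ and ψ₁, μ₁ as given. -/
theorem stmt5 (σ₀ σ₁ σ₂ τ₀ τ₁ : ℂ) (n : ℤ)
    (lam φ₁ ψ₁ μ₁ : ℂ)
    (hlam : lam = (n : ℂ) * τ₀ + (n : ℂ) * ((n : ℂ) - 1) * σ₀)
    (hφ : φ₁ = τ₀ + ((n : ℂ) - 1) * σ₀)
    (hne : 2 * φ₁ + 2 * σ₀ - τ₀ ≠ 0)
    (hψ : ψ₁ = (φ₁ * (τ₁ + τ₀ - σ₀ - φ₁) + lam * σ₀ + lam * σ₁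
        + (1 / 2) * lam * τ₀) / (2 * φ₁ + 2 * σ₀ - τ₀))
    (hμ : μ₁ = ψ₁ * (ψ₁ + φ₁ + σ₁ + σ₀ - τ₁)
        - (1 / 2) * lam * (σ₀ + σ₁ + 2 * σ₂ + τ₁)
        - φ₁ * (σ₂ + τ₁ + (1 / 2) * lam) - (1 / 4) * lam ^ 2) :
    ∀ x : ℂ,
      (lam / 2) * ((σ₀ * (x + 1) ^ 2 + σ₁ * (x + 1) + σ₂)
          + (σ₀ * x ^ 2 + σ₁ * x + σ₂) + (τ₀ * x + τ₁))
        + lam ^ 2 / 4 + μ₁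
        + ((σ₀ * x ^ 2 + σ₁ * x + σ₂) + (τ₀ * x + τ₁)) * (φ₁ * (x + 1) + ψ₁)
        - (σ₀ * (x + 1) ^ 2 + σ₁ * (x + 1) + σ₂) * (φ₁ * x + ψ₁)
        + (lam / 2) * ((φ₁ * (x + 1) + ψ₁) - (φ₁ * x + ψ₁))
        - (φ₁ * x + ψ₁) * (φ₁ * (x + 1) + ψ₁) = 0 := by
  intro x
  have hψD : ψ₁ * (2 * φ₁ + 2 * σ₀ - τ₀) = φ₁ * (τ₁ + τ₀ - σ₀ - φ₁) + lam * σ₀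
      + lam * σ₁ + (1 / 2) * lam * τ₀ := by
    rw [hψ, div_mul_cancel₀ _ hne]
  rw [riccati_residual_linear_eq σ₀ σ₁ σ₂ τ₀ τ₁ n lam φ₁ ψ₁ μ₁ x hlam hφ hμ, hψD, sub_self,
    mul_zero]
end

section
/- Let σ(x) = σ₀x² + σ₁x + σ₂, τ(x) = τ₀x + τ₁, λ(n) = nτ₀ + n(n-1)σ₀. Set φ₂(n) = -nσ₀, and assume 2φ₂(n) + 2σ₀ - τ₀ ≠ 0. Define ψ₂(n) = [φ₂(n)(τ₁ + τ₀ - σ₀ - φ₂(n)) + λ(n)σ₀ + λ(n)σ₁ + (1/2)λ(n)τ₀]/(2φ₂(n) + 2σ₀ - τ₀) and μ₂(n) = ψ₂(n)(ψ₂(n) + φ₂(n) + σ₁ + σ₀ - τ₁) - (1/2)λ(n)(σ₀ + σ₁ + 2σ₂ + τ₁) - φ₂(n)(σ₂ + τ₁ + (1/2)λ(n)) - (1/4)λ(n)². Then φ(x) = φ₂(n)x + ψ₂(n) satisfies the same discrete Riccati equation with μ₂(n) in place of μ₁(n). -/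
/-- The first polynomial solution φ(x) = φ₂(n)x + ψ₂(n) of the
discrete Riccati equation, with φ₂(n) = -nσ₀ and ψ₂, μ₂ as given. -/
theorem stmt6 (σ₀ σ₁ σ₂ τ₀ τ₁ : ℂ) (n : ℤ)
    (lam φ₂ ψ₂ μ₂ : ℂ)
    (hlam : lam = (n : ℂ) * τ₀ + (n : ℂ) * ((n : ℂ) - 1) * σ₀)
    (hφ : φ₂ = -(n : ℂ) * σ₀)
    (hne : 2 * φ₂ + 2 * σ₀ - τ₀ ≠ 0)
    (hψ : ψ₂ = (φ₂ * (τ₁ + τ₀ - σ₀ - φ₂) + lam * σ₀ + lam * σ₁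
        + (1 / 2) * lam * τ₀) / (2 * φ₂ + 2 * σ₀ - τ₀))
    (hμ : μ₂ = ψ₂ * (ψ₂ + φ₂ + σ₁ + σ₀ - τ₁)
        - (1 / 2) * lam * (σ₀ + σ₁ + 2 * σ₂ + τ₁)
        - φ₂ * (σ₂ + τ₁ + (1 / 2) * lam) - (1 / 4) * lam ^ 2) :
    ∀ x : ℂ,
      (lam / 2) * ((σ₀ * (x + 1) ^ 2 + σ₁ * (x + 1) + σ₂)
          + (σ₀ * x ^ 2 + σ₁ * x + σ₂) + (τ₀ * x + τ₁))
        + lam ^ 2 / 4 + μ₂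
        + ((σ₀ * x ^ 2 + σ₁ * x + σ₂) + (τ₀ * x + τ₁)) * (φ₂ * (x + 1) + ψ₂)
        - (σ₀ * (x + 1) ^ 2 + σ₁ * (x + 1) + σ₂) * (φ₂ * x + ψ₂)
        + (lam / 2) * ((φ₂ * (x + 1) + ψ₂) - (φ₂ * x + ψ₂))
        - (φ₂ * x + ψ₂) * (φ₂ * (x + 1) + ψ₂) = 0 := by
  intro x
  have hq : ψ₂ * (2 * φ₂ + 2 * σ₀ - τ₀) = φ₂ * (τ₁ + τ₀ - σ₀ - φ₂) + lam * σ₀ + lam * σ₁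
      + (1 / 2) * lam * τ₀ := by
    rw [hψ, div_mul_cancel₀ _ hne]
  subst hμ hφ hlam
  linear_combination (-x) * hq
end

section
/- For the Meixner operator H(x;n) = E² - [(μ+1)x + μ(γ+1) + 1 + λ(n)]E + μx² + μ(γ+1)x + γμ with λ(n) = -n(1-μ): H(x;n) - μ₂(n) = (E + g₂)(E + f₂) holds with f₂(x;n) = -μ(x + γ + n), g₂(x;n) = -x + n - 1, μ₂(n) = μn(γ + n - 1), as an operator identity. -/
/-- Meixner: H(x;n) - μ₂(n) = (E+g₂)(E+f₂) with f₂(x;n) = -μ(x+γ+n),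
g₂(x;n) = -x+n-1, μ₂(n) = μn(γ+n-1), λ(n) = -n(1-μ). -/
theorem stmt12 (μ γ : ℂ) (n : ℤ) :
    ∀ Φ : ℝ → ℂ, ∀ x : ℝ,
      Φ (x + 2) - ((μ + 1) * (x : ℂ) + μ * (γ + 1) + 1 + (-(n : ℂ) * (1 - μ))) * Φ (x + 1)
          + (μ * (x : ℂ) ^ 2 + μ * (γ + 1) * (x : ℂ) + γ * μ) * Φ x
          - μ * (n : ℂ) * (γ + (n : ℂ) - 1) * Φ x =
        (Φ (x + 2) + (-μ * ((x : ℂ) + 1 + γ + (n : ℂ))) * Φ (x + 1))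
          + (-(x : ℂ) + (n : ℂ) - 1) * (Φ (x + 1) + (-μ * ((x : ℂ) + γ + (n : ℂ))) * Φ x) := by
  intro Φ x
  ring
end

section
/- For the Meixner case, the commutation relation H(x;n+1)(E + f₁(x;n)) = (E + f₁(x;n))H(x;n) holds, where H(x;m) = E² - [(μ+1)x + μ(γ+1) + 1 + λ(m)]E + μx² + μ(γ+1)x + γμ, λ(m) = -m(1-μ), and f₁(x;n) = -x + n. -/
/-- Meixner commutation relation
H(x;n+1)(E+f₁(x;n)) = (E+f₁(x;n))H(x;n), with f₁(x;n) = -x+n and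
H(x;m) = E² - [(μ+1)x + μ(γ+1) + 1 + λ(m)]E + μx² + μ(γ+1)x + γμ, λ(m) = -m(1-μ). -/
theorem stmt13 (μ γ : ℂ) (n : ℤ)
    (H : ℤ → (ℝ → ℂ) → (ℝ → ℂ))
    (hH : ∀ m : ℤ, ∀ Φ : ℝ → ℂ, ∀ x : ℝ,
      H m Φ x = Φ (x + 2)
        - ((μ + 1) * (x : ℂ) + μ * (γ + 1) + 1 + (-(m : ℂ) * (1 - μ))) * Φ (x + 1)
        + (μ * (x : ℂ) ^ 2 + μ * (γ + 1) * (x : ℂ) + γ * μ) * Φ x) :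
    ∀ Φ : ℝ → ℂ, ∀ x : ℝ,
      H (n + 1) (fun y : ℝ => Φ (y + 1) + (-(y : ℂ) + (n : ℂ)) * Φ y) x =
        H n Φ (x + 1) + (-(x : ℂ) + (n : ℂ)) * H n Φ x := by
  intro Φ x
  simp only [hH]
  push_cast
  have h1 : (x : ℝ) + 2 + 1 = x + 3 := by ring
  have h2 : (x : ℝ) + 1 + 2 = x + 3 := by ring
  have h3 : (x : ℝ) + 1 + 1 = x + 2 := by ring
  rw [h1, h2, h3]
  ring
end

section
/- For the Charlier case, the commutation relation H(x;n-1)(E + f₂(x;n)) = (E + f₂(x;n))H(x;n) holds, where H(x;m) = E² - (x + μ - m + 1)E + μ(x+1) and f₂(x;n) = -μ. -/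
/-- Charlier commutation relation
H(x;n-1)(E+f₂(x;n)) = (E+f₂(x;n))H(x;n), with f₂(x;n) = -μ and
H(x;m) = E² - (x + μ - m + 1)E + μ(x+1). -/
theorem stmt14 (μ : ℂ) (n : ℤ)
    (H : ℤ → (ℝ → ℂ) → (ℝ → ℂ))
    (hH : ∀ m : ℤ, ∀ Φ : ℝ → ℂ, ∀ x : ℝ,
      H m Φ x = Φ (x + 2) - ((x : ℂ) + μ - (m : ℂ) + 1) * Φ (x + 1)
        + μ * ((x : ℂ) + 1) * Φ x) :
    ∀ Φ : ℝ → ℂ, ∀ x : ℝ,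
      H (n - 1) (fun y : ℝ => Φ (y + 1) + (-μ) * Φ y) x =
        H n Φ (x + 1) + (-μ) * H n Φ x := by
  intro Φ x
  simp only [hH]
  push_cast
  have h1 : x + 2 + 1 = x + 3 := by ring
  have h2 : x + 1 + 2 = x + 3 := by ring
  have h3 : x + 1 + 1 = x + 2 := by ring
  rw [h1, h2, h3]
  ring
end
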